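/- For every finite simple graph G, 2α(G) ≤ |corona(G)| + |core(G)| ≤ 2(|V(G)| − μ(G)). -/

import Mathlib

open Set

variable {V : Type*}

/-- `S` is an independent set of `G`. -/
def IndepSet (G : SimpleGraph V) (S : Set V) : Prop :=
  ∀ x ∈ S, ∀ y ∈ S, ¬ G.Adj x y

/-- The independence number `α(G)`. -/
noncomputable def alpha (G : SimpleGraph V) : ℕ :=
  sSup {n | ∃ S : Set V, IndepSet G S ∧ S.ncard = n}

/-- `S` is a maximum independent set of `G`. -/
def MaxIndep (G : SimpleGraph V) (S : Set V) : Prop :=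
  IndepSet G S ∧ S.ncard = alpha G

/-- `Ω(G)`, the family of all maximum independent sets. -/
def Omega (G : SimpleGraph V) : Set (Set V) := {S | MaxIndep G S}

/-- `core(G)`, the intersection of all maximum independent sets. -/
def core (G : SimpleGraph V) : Set V := ⋂₀ Omega G

/-- `corona(G)`, the union of all maximum independent sets. -/
def corona (G : SimpleGraph V) : Set V := ⋃₀ Omega G

/-- The matching number `μ(G)`. -/
noncomputable def matchNum (G : SimpleGraph V) : ℕ :=
  sSup {n | ∃ M : G.Subgraph, M.IsMatching ∧ M.edgeSet.ncard = n}

/-- A matching from `X` into `Y`: an injection `f` on `X` into `Y` such that each `x ∈ X`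
is adjacent to `f x` and the edges `{x, f x}` are pairwise disjoint. -/
def MatchingFrom (G : SimpleGraph V) (X Y : Set V) : Prop :=
  ∃ f : V → V, Set.InjOn f X ∧ (∀ x ∈ X, f x ∈ Y ∧ G.Adj x (f x)) ∧
    ∀ x ∈ X, ∀ y ∈ X, x ≠ y → f x ≠ y

/-! Lower bound: adding a maximum independent set `S` to a nonempty family `F` of independent sets
does not decrease `|⋃₀ F| + |⋂₀ F|`, because `⋂₀ F ∪ (⋃₀ F ∩ S)` is again independent and hence
has at most `|S|` elements. Starting from one maximum independent set (value `2α`) and adding the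
others yields `2α ≤ |corona| + |core|`.

Upper bound: fix a maximum matching `M`. No core vertex has a neighbour in the corona, so the
`M`-partners of the matched core vertices lie outside the corona; thus corona and core together
meet `V(M)` in at most `|V(M)| = 2μ` vertices, and each of them contains at most `n - 2μ`
unmatched vertices. -/

theorem Set.ncard_add_ncard_le_ncard_union_add_ncard_inter {α : Type*} [Finite α] {S U I : Set α}
    (hIU : I ⊆ U) (h : (I ∪ U ∩ S).ncard ≤ S.ncard) :
    U.ncard + I.ncard ≤ (S ∪ U).ncard + (S ∩ I).ncard := by
  have hSU := ncard_union_add_ncard_inter S U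
  have hIUS := ncard_union_add_ncard_inter I (U ∩ S)
  rw [inter_comm S U] at hSU
  rw [← inter_assoc, inter_eq_left.2 hIU, inter_comm I S] at hIUS
  omega

section Independence

variable {G : SimpleGraph V}

theorem IndepSet.sInter_union_sUnion_inter {F : Set (Set V)} {S : Set V} (hF : F.Nonempty)
    (hFi : ∀ T ∈ F, IndepSet G T) (hS : IndepSet G S) : IndepSet G (⋂₀ F ∪ ⋃₀ F ∩ S) := by
  rintro x (hx | ⟨⟨T, hT, hxT⟩, hxS⟩) y (hy | ⟨⟨T', hT', hyT'⟩, hyS⟩)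
  · obtain ⟨T, hT⟩ := hF
    exact hFi T hT x (hx T hT) y (hy T hT)
  · exact hFi T' hT' x (hx T' hT') y hyT'
  · exact hFi T hT x hxT y (hy T hT)
  · exact hS x hxS y hyS

theorem not_adj_of_mem_core_of_mem_corona {x y : V} (hx : x ∈ core G) (hy : y ∈ corona G) :
    ¬ G.Adj x y := by
  obtain ⟨T, hT, hyT⟩ := hy
  exact hT.1 x (hx T hT) y hyT

variable [Finite V]

theorem bddAbove_ncard_indepSet (G : SimpleGraph V) :
    BddAbove {n | ∃ S : Set V, IndepSet G S ∧ S.ncard = n} :=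
  ⟨Nat.card V, by rintro _ ⟨S, -, rfl⟩; exact ncard_le_card S⟩

theorem IndepSet.ncard_le_alpha {S : Set V} (hS : IndepSet G S) : S.ncard ≤ alpha G :=
  le_csSup (bddAbove_ncard_indepSet G) ⟨S, hS, rfl⟩

theorem nonempty_omega (G : SimpleGraph V) : (Omega G).Nonempty :=
  Nat.sSup_mem (s := {n | ∃ S : Set V, IndepSet G S ∧ S.ncard = n})
    ⟨0, ∅, fun _ h => h.elim, ncard_empty V⟩ (bddAbove_ncard_indepSet G)

theorem ncard_sUnion_add_ncard_sInter_le_insert {F : Set (Set V)} {S : Set V} (hF : F.Nonempty)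
    (hFi : ∀ T ∈ F, IndepSet G T) (hS : MaxIndep G S) :
    (⋃₀ F).ncard + (⋂₀ F).ncard ≤ (⋃₀ insert S F).ncard + (⋂₀ insert S F).ncard := by
  rw [sUnion_insert, sInter_insert]
  refine Set.ncard_add_ncard_le_ncard_union_add_ncard_inter
    ((sInter_subset_of_mem hF.some_mem).trans (subset_sUnion_of_mem hF.some_mem)) ?_
  exact hS.2 ▸ (IndepSet.sInter_union_sUnion_inter hF hFi hS.1).ncard_le_alpha

theorem two_mul_alpha_le_ncard_corona_add_ncard_core (G : SimpleGraph V) :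
    2 * alpha G ≤ (corona G).ncard + (core G).ncard := by
  obtain ⟨S₀, hS₀⟩ := nonempty_omega G
  suffices h : 2 * alpha G ≤ (⋃₀ insert S₀ (Omega G)).ncard + (⋂₀ insert S₀ (Omega G)).ncard by
    rwa [insert_eq_of_mem hS₀] at h
  refine Finite.induction_on_subset (motive := fun F _ =>
    2 * alpha G ≤ (⋃₀ insert S₀ F).ncard + (⋂₀ insert S₀ F).ncard) _ (toFinite _) ?_ ?_
  · simp only [insert_empty_eq, sUnion_singleton, sInter_singleton, hS₀.2]
    omega
  · intro S F hS hFΩ _ ih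
    rw [insert_comm]
    refine ih.trans (ncard_sUnion_add_ncard_sInter_le_insert (insert_nonempty _ _) ?_ hS)
    rintro T (rfl | hT)
    exacts [hS₀.1, (hFΩ hT).1]

end Independence

namespace SimpleGraph.Subgraph.IsMatching

variable [Finite V] {G : SimpleGraph V} {M : G.Subgraph}

theorem two_mul_ncard_edgeSet (hM : M.IsMatching) :
    2 * M.edgeSet.ncard = M.verts.ncard := by
  classical
  have := Fintype.ofFinite V
  have hdeg : ∀ v : M.verts, M.coe.degree v = 1 := fun v => by
    rw [M.coe_degree]; convert isMatching_iff_forall_degree.1 hM v v.2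
  rw [← M.image_coe_edgeSet_coe,
    ncard_image_of_injective _ (Sym2.map.injective Subtype.coe_injective), ← coe_edgeFinset,
    ncard_coe_finset, ← M.coe.sum_degrees_eq_twice_card_edges,
    Finset.sum_congr rfl fun v _ => by convert hdeg v, Finset.sum_const, smul_eq_mul, mul_one,
    Finset.card_univ, ← Nat.card_eq_fintype_card, Nat.card_coe_set_eq]

theorem ncard_inter_verts_add_ncard_inter_verts_le (hM : M.IsMatching) {A B : Set V}
    (hBA : ∀ x ∈ B, ∀ y ∈ A, ¬ G.Adj x y) :
    (A ∩ M.verts).ncard + (B ∩ M.verts).ncard ≤ M.verts.ncard := by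
  choose! p hp using fun v (hv : v ∈ M.verts) => (hM hv).exists
  have hpB : InjOn p (B ∩ M.verts) := fun u hu v hv huv =>
    hM.eq_of_adj_right (hp u hu.2) (huv ▸ hp v hv.2)
  have hdisj : Disjoint (A ∩ M.verts) (p '' (B ∩ M.verts)) := by
    refine Set.disjoint_left.2 ?_
    rintro _ ⟨hA, -⟩ ⟨v, ⟨hvB, hv⟩, rfl⟩
    exact hBA v hvB _ hA (M.adj_sub (hp v hv))
  have hsub : A ∩ M.verts ∪ p '' (B ∩ M.verts) ⊆ M.verts :=
    union_subset inter_subset_right (image_subset_iff.2 fun v hv => (hp v hv.2).snd_mem)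
  rw [← hpB.ncard_image, ← ncard_union_eq hdisj]
  exact ncard_le_ncard hsub

theorem ncard_add_ncard_add_ncard_verts_le (hM : M.IsMatching) {A B : Set V}
    (hBA : ∀ x ∈ B, ∀ y ∈ A, ¬ G.Adj x y) :
    A.ncard + B.ncard + M.verts.ncard ≤ 2 * Nat.card V := by
  have hP := hM.ncard_inter_verts_add_ncard_inter_verts_le hBA
  have hA := ncard_inter_add_ncard_sdiff_eq_ncard A M.verts
  have hB := ncard_inter_add_ncard_sdiff_eq_ncard B M.verts
  have hAc : (A \ M.verts).ncard ≤ M.vertsᶜ.ncard := ncard_le_ncard fun _ h => h.2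
  have hBc : (B \ M.verts).ncard ≤ M.vertsᶜ.ncard := ncard_le_ncard fun _ h => h.2
  have hV := ncard_add_ncard_compl M.verts
  omega

end SimpleGraph.Subgraph.IsMatching

theorem exists_isMatching_ncard_edgeSet_eq_matchNum [Finite V] (G : SimpleGraph V) :
    ∃ M : G.Subgraph, M.IsMatching ∧ M.edgeSet.ncard = matchNum G :=
  Nat.sSup_mem (s := {n | ∃ M : G.Subgraph, M.IsMatching ∧ M.edgeSet.ncard = n})
    ⟨0, ⊥, fun _ h => h.elim, by simp⟩
    ⟨Nat.card (Sym2 V), by rintro _ ⟨M, -, rfl⟩; exact ncard_le_card _⟩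

theorem stmt_10 [Fintype V] (G : SimpleGraph V) :
    2 * alpha G ≤ (corona G).ncard + (core G).ncard ∧
      (corona G).ncard + (core G).ncard ≤ 2 * (Fintype.card V - matchNum G) := by
  refine ⟨two_mul_alpha_le_ncard_corona_add_ncard_core G, ?_⟩
  obtain ⟨M, hM, hμ⟩ := exists_isMatching_ncard_edgeSet_eq_matchNum G
  have h := hM.ncard_add_ncard_add_ncard_verts_le fun _ hx _ hy =>
    not_adj_of_mem_core_of_mem_corona hx hy
  rw [← hM.two_mul_ncard_edgeSet, hμ, Nat.card_eq_fintype_card] at h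
  omega
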